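/- Let a > 0, b > 0 and k ≥ 1 be fixed real numbers, and let (ρ_n)_{n≥1} be a sequence of positive reals with ρ_n ≥ b/(b+n) for each n. If ρ_n(b+n) → ∞ as n → ∞, then ∫_0^∞ (1+g)^{−k/2} p_n^R(g) dg → 0 as n → ∞, where p_n^R(g) = a[ρ_n(b+n)]^a (g+b)^{−(a+1)} for g > ρ_n(b+n) − b and 0 otherwise. -/

import Mathlib

open MeasureTheory Filter Topology Real

/-- The mixing density of the robust prior for sample size `n`. -/
noncomputable def robustMixing (a b ρ : ℝ) (n : ℕ) (g : ℝ) : ℝ :=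
  if ρ * (b + n) - b < g then a * (ρ * (b + n)) ^ a * (g + b) ^ (-(a + 1)) else 0

/-!
On its support `g > ρₙ(b+n) - b` the prior density is a Pareto density shifted by `-b`, so it
integrates to one, while the weight `(1+g)^{-k/2}` is at most `(1 + ρₙ(b+n) - b)^{-k/2}` there.
Hence the integral is squeezed between `0` and a quantity tending to `0` as `ρₙ(b+n) → ∞`.
-/

open Set

lemma setIntegral_Ioi_comp_add_right {E : Type*} [NormedAddCommGroup E] [NormedSpace ℝ E]
    (f : ℝ → E) (c d : ℝ) : ∫ x in Ioi (c - d), f (x + d) = ∫ x in Ioi c, f x := by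
  simpa using (measurePreserving_add_right volume d).setIntegral_preimage_emb
    (measurableEmbedding_addRight d) f (Ioi c)

lemma integrableOn_Ioi_comp_add_right_iff {E : Type*} [NormedAddCommGroup E] {f : ℝ → E}
    (c d : ℝ) :
    IntegrableOn (fun x => f (x + d)) (Ioi (c - d)) ↔ IntegrableOn f (Ioi c) := by
  simpa [Function.comp_def] using (measurePreserving_add_right volume d).integrableOn_comp_preimage
    (measurableEmbedding_addRight d) (f := f) (s := Ioi c)

lemma setIntegral_mul_le_mul_setIntegral {α : Type*} [MeasurableSpace α] {μ : Measure α}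
    {s : Set α} {φ f : α → ℝ} {c : ℝ} (hf : IntegrableOn f s μ)
    (hf₀ : ∀ x ∈ s, 0 ≤ f x) (hφ₀ : ∀ x ∈ s, 0 ≤ φ x) (hφc : ∀ x ∈ s, φ x ≤ c) :
    ∫ x in s, φ x * f x ∂μ ≤ c * ∫ x in s, f x ∂μ := by
  rw [← integral_const_mul]
  exact setIntegral_mono_of_nonneg (fun x hx => mul_nonneg (hφ₀ x hx) (hf₀ x hx))
    (fun x hx => mul_le_mul_of_nonneg_right (hφc x hx) (hf₀ x hx)) (hf.const_mul c)

lemma integrableOn_Ioi_rpow_add {a b R : ℝ} (ha : 0 < a) (hR : 0 < R) :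
    IntegrableOn (fun g => (g + b) ^ (-(a + 1))) (Ioi (R - b)) :=
  (integrableOn_Ioi_comp_add_right_iff R b).2 (integrableOn_Ioi_rpow_of_lt (by linarith) hR)

lemma integral_Ioi_mul_rpow_add_eq_one {a b R : ℝ} (ha : 0 < a) (hR : 0 < R) :
    ∫ g in Ioi (R - b), a * R ^ a * (g + b) ^ (-(a + 1)) = 1 := by
  rw [integral_const_mul, setIntegral_Ioi_comp_add_right (fun x => x ^ (-(a + 1))),
    integral_Ioi_rpow_of_lt (by linarith) hR, show -(a + 1) + 1 = -a by ring, rpow_neg hR.le]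
  have : 0 < R ^ a := rpow_pos_of_pos hR a
  field_simp

lemma robustMixing_eq_indicator (a b ρ : ℝ) (n : ℕ) :
    robustMixing a b ρ n = (Ioi (ρ * (b + n) - b)).indicator
      (fun g => a * (ρ * (b + n)) ^ a * (g + b) ^ (-(a + 1))) := by
  ext g
  simp [robustMixing, indicator_apply]

lemma robustMixing_nonneg {a b ρ : ℝ} {n : ℕ} (ha : 0 ≤ a) (hR : 0 ≤ ρ * (b + n)) (g : ℝ) :
    0 ≤ robustMixing a b ρ n g := by
  unfold robustMixing
  split_ifs with hg
  · exact mul_nonneg (mul_nonneg ha (rpow_nonneg hR _)) (rpow_nonneg (by linarith) _)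
  · exact le_rfl

lemma integral_rpow_mul_robustMixing_le {a b k ρ : ℝ} {n : ℕ} (ha : 0 < a) (hk : 0 ≤ k)
    (hR : 0 < ρ * (b + n)) (hsupp : 0 ≤ ρ * (b + n) - b) :
    ∫ g in Ioi 0, (1 + g) ^ (-k / 2) * robustMixing a b ρ n g
      ≤ (1 + (ρ * (b + n) - b)) ^ (-k / 2) := by
  set T := ρ * (b + n) - b
  have hsupp_inter : Ioi 0 ∩ Ioi T = Ioi T := by
    rw [Ioi_inter_Ioi, max_eq_right hsupp]
  have hdensity₀ : ∀ g ∈ Ioi T, 0 ≤ a * (ρ * (b + n)) ^ a * (g + b) ^ (-(a + 1)) := fun g hg =>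
    mul_nonneg (mul_nonneg ha.le (rpow_nonneg hR.le _)) (rpow_nonneg (by linarith [mem_Ioi.1 hg]) _)
  have hweight : ∀ g ∈ Ioi T, (1 + g) ^ (-k / 2) ≤ (1 + T) ^ (-k / 2) := fun g hg =>
    rpow_le_rpow_of_nonpos (by linarith) (by linarith [mem_Ioi.1 hg]) (by linarith)
  calc ∫ g in Ioi 0, (1 + g) ^ (-k / 2) * robustMixing a b ρ n g
      = ∫ g in Ioi T, (1 + g) ^ (-k / 2) * (a * (ρ * (b + n)) ^ a * (g + b) ^ (-(a + 1))) := by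
        rw [robustMixing_eq_indicator]
        simp_rw [← indicator_mul_right _ fun g : ℝ => (1 + g) ^ (-k / 2)]
        rw [setIntegral_indicator measurableSet_Ioi, hsupp_inter]
    _ ≤ (1 + T) ^ (-k / 2) * ∫ g in Ioi T, a * (ρ * (b + n)) ^ a * (g + b) ^ (-(a + 1)) :=
        setIntegral_mul_le_mul_setIntegral ((integrableOn_Ioi_rpow_add ha hR).const_mul _) hdensity₀
          (fun g hg => rpow_nonneg (by linarith [mem_Ioi.1 hg]) _) hweight
    _ = (1 + T) ^ (-k / 2) := by rw [integral_Ioi_mul_rpow_add_eq_one ha hR, mul_one]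

theorem robust_model_selection_consistency_general
    (a b k : ℝ) (ha : 0 < a) (hk : 1 ≤ k)
    (ρ : ℕ → ℝ)
    (hlim : Tendsto (fun n : ℕ => ρ n * (b + n)) atTop atTop) :
    Tendsto
      (fun n : ℕ => ∫ g in Set.Ioi (0:ℝ), (1 + g) ^ (-k / 2) * robustMixing a b (ρ n) n g)
      atTop (𝓝 0) := by
  have hweight : Tendsto (fun n : ℕ => (1 + (ρ n * (b + n) - b)) ^ (-k / 2)) atTop (𝓝 0) := by
    simp_rw [neg_div]
    exact (tendsto_rpow_neg_atTop (by linarith)).comp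
      (tendsto_atTop_add_const_left _ _ (tendsto_atTop_add_const_right _ _ hlim))
  refine squeeze_zero' ?_ ?_ hweight
  · filter_upwards [hlim.eventually_ge_atTop 0] with n hR
    exact setIntegral_nonneg measurableSet_Ioi fun g hg =>
      mul_nonneg (rpow_nonneg (by linarith [mem_Ioi.1 hg]) _) (robustMixing_nonneg ha.le hR g)
  · filter_upwards [hlim.eventually_gt_atTop (max b 0)] with n hR
    exact integral_rpow_mul_robustMixing_le ha (by linarith)
      (lt_of_le_of_lt (le_max_right _ _) hR) (by linarith [le_max_left b 0])

/-- Corollary 1 of the paper (model selection consistency of the robust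
prior): if `ρₙ(b+n) → ∞`, then `∫₀^∞ (1+g)^{-k/2} pₙᴿ(g) dg → 0`. -/
theorem robust_model_selection_consistency
    (a b k : ℝ) (ha : 0 < a) (hb : 0 < b) (hk : 1 ≤ k)
    (ρ : ℕ → ℝ) (hρ_pos : ∀ n, 0 < ρ n) (hρ : ∀ n : ℕ, 1 ≤ n → b / (b + n) ≤ ρ n)
    (hlim : Tendsto (fun n : ℕ => ρ n * (b + n)) atTop atTop) :
    Tendsto
      (fun n : ℕ => ∫ g in Set.Ioi (0:ℝ), (1 + g) ^ (-k / 2) * robustMixing a b (ρ n) n g)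
      atTop (𝓝 0) :=
  robust_model_selection_consistency_general a b k ha hk ρ hlim
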